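/- Let (G_t)_{t=0}^m be a filtration on a probability space and let (H_t, α̃_t, φ_t)_{t=0}^m be a conditionally valid testing sequence with respect to (G_t)_{t=0}^m, where α̃_t = α_t + δ_t with α_t ∈ [0,1] and δ_t both G_t-measurable, and suppose the target levels satisfy 1 − ∏_{t=0}^m (1 − α_t) ≤ α almost surely. Define τ := min{t : φ_t = 1}, with τ = ∞ if no φ_t equals 1, and H_∞ := 1. Then there exists a random variable ε_0 which is a linear combination of (δ_t)_{t=0}^m with random coefficients lying in [0,1] (so in particular |ε_0| ≤ Σ_{t=0}^m |δ_t| almost surely) such that P(H_τ = 0) ≤ α + E[ε_0]; consequently P(H_τ = 0) ≤ α + E[Σ_{t=0}^m |δ_t|]. If moreover the testing sequence is conditionally exact, 1 − ∏_{t=0}^m (1 − α_t) = α almost surely, and H_t = 0 almost surely for all t, then P(H_τ = 0) = α + E[ε_0]. -/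

import Mathlib

/-!
Let `D_t` be the event that nothing is rejected before `t`, `Q_t = ∏_{s<t} (1 - α_s)`, and attach
to each time the weight `v_t ∈ [0, 1]`, essentially `(1 - α) / Q_t`, which is known at time
`t - 1`. The potential `E[1_{D_t} (1 - v_t)]` starts at `1 - v_0 ≤ α`. Conditioning on
`σ(G_t, φ_0, …, φ_{t-1})`, validity and `v_t = (1 - α_t) v_{t+1}` show that the probability of a
first rejection at a null time `t`, plus the next potential, exceeds the current potential by at
most `E[1_{H_t = 0} 1_{D_t} v_{t+1} δ_t]`; telescoping gives the upper bound. Under exactness and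
the global null the same step runs backwards with error at least `E[1_{D_t} min(δ_t, 0)]`, and the
last potential vanishes since an exact budget forces `v_{m+1} = 1`. The required `ε₀` is a convex
combination of the two coefficient families, chosen to make the bound an equality.
-/

open MeasureTheory ProbabilityTheory Filter Finset

namespace SequentialTest

variable {Ω : Type*}

/-! With `R t = {φ_t = 1}` and `N t = {H_t = 0}`, the event `firstReject R t ∩ N t` is
`{τ = t, H_τ = 0}`, and `histSigma G R t` is `σ(G_t, φ_0, …, φ_{t-1})`. -/

def noRejectBefore (R : ℕ → Set Ω) (t : ℕ) : Set Ω := ⋂ s ∈ range t, (R s)ᶜ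

def firstReject (R : ℕ → Set Ω) (t : ℕ) : Set Ω := R t ∩ noRejectBefore R t

abbrev histSigma (G : ℕ → MeasurableSpace Ω) (R : ℕ → Set Ω) (t : ℕ) : MeasurableSpace Ω :=
  G t ⊔ ⨆ s ∈ range t, MeasurableSpace.generateFrom {R s}

noncomputable def survivalProd (a : ℕ → Ω → ℝ) (t : ℕ) (ω : Ω) : ℝ := ∏ s ∈ range t, (1 - a s ω)

/-- `z` is the weight once the budget is exhausted (`Q_t = 0`): `z = 0` keeps
`v_t = (1 - α_t) v_{t+1}` for the upper bound, `z = 1` gives `v_{m+1} = 1` for the lower bound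
even when `α = 1`. -/
noncomputable def budgetWeight (α : ℝ) (a : ℕ → Ω → ℝ) (z : ℝ) (t : ℕ) (ω : Ω) : ℝ :=
  if 0 < survivalProd a t ω then max 0 (min 1 ((1 - α) / survivalProd a t ω)) else z

noncomputable def potential [MeasurableSpace Ω] (μ : Measure Ω) (R : ℕ → Set Ω)
    (v : ℕ → Ω → ℝ) (t : ℕ) : ℝ :=
  ∫ ω, (noRejectBefore R t).indicator (1 - v t) ω ∂μ

noncomputable def stepValue (N R : ℕ → Set Ω) (t : ℕ) (q v : Ω → ℝ) : Ω → ℝ :=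
  (noRejectBefore R t).indicator fun ω => (1 - v ω) * (1 - q ω) + (N t).indicator 1 ω * q ω

section Weights

variable {a : ℕ → Ω → ℝ} {α : ℝ} {t : ℕ} {ω : Ω}

@[simp]
lemma survivalProd_zero : survivalProd a 0 ω = 1 := by simp [survivalProd]

lemma survivalProd_succ : survivalProd a (t + 1) ω = survivalProd a t ω * (1 - a t ω) :=
  prod_range_succ _ _

lemma survivalProd_le_of_le {t' : ℕ} (htt' : t ≤ t') (ha : ∀ s < t', a s ω ∈ Set.Icc 0 1) :
    survivalProd a t' ω ≤ survivalProd a t ω :=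
  prod_le_prod_of_subset_of_le_one (range_mono htt')
    (fun s hs => sub_nonneg.2 (ha s (mem_range.1 hs)).2)
    (fun s hs _ => sub_le_self _ (ha s (mem_range.1 hs)).1)

lemma survivalProd_mem_Icc (ha : ∀ s < t, a s ω ∈ Set.Icc 0 1) :
    survivalProd a t ω ∈ Set.Icc 0 1 :=
  ⟨prod_nonneg fun s hs => sub_nonneg.2 (ha s (mem_range.1 hs)).2,
    (survivalProd_le_of_le (Nat.zero_le t) ha).trans_eq survivalProd_zero⟩

lemma max_zero_min_one_mem (x : ℝ) : max 0 (min 1 x) ∈ Set.Icc (0 : ℝ) 1 :=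
  ⟨le_max_left _ _, max_le zero_le_one (min_le_left _ _)⟩

lemma budgetWeight_mem {z : ℝ} (hz : z ∈ Set.Icc 0 1) :
    budgetWeight α a z t ω ∈ Set.Icc 0 1 := by
  unfold budgetWeight
  split_ifs
  exacts [max_zero_min_one_mem _, hz]

lemma budgetWeight_zero {z : ℝ} : budgetWeight α a z 0 ω = max 0 (min 1 (1 - α)) := by
  simp [budgetWeight]

lemma budgetWeight_eq_mul_succ (ha : a t ω ∈ Set.Icc 0 1) (hQ : 0 ≤ survivalProd a t ω)
    (hbudget : 1 - α ≤ survivalProd a (t + 1) ω) :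
    budgetWeight α a 0 t ω = (1 - a t ω) * budgetWeight α a 0 (t + 1) ω := by
  rcases le_or_gt (1 - α) 0 with hβ | hβ
  · have hzero : ∀ s, budgetWeight α a 0 s ω = 0 := fun s => by
      unfold budgetWeight
      split_ifs with hpos
      exacts [max_eq_left ((min_le_right _ _).trans (div_nonpos_of_nonpos_of_nonneg hβ hpos.le)),
        rfl]
    rw [hzero, hzero, mul_zero]
  rw [survivalProd_succ] at hbudget
  have hxy := hβ.trans_le hbudget
  have hx : 0 < survivalProd a t ω := pos_of_mul_pos_left hxy (sub_nonneg.2 ha.2)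
  have hx1 : (1 - α) / survivalProd a t ω ≤ 1 :=
    (div_le_one hx).2 (hbudget.trans (mul_le_of_le_one_right hQ (sub_le_self _ ha.1)))
  simp only [budgetWeight, survivalProd_succ, if_pos hx, if_pos hxy]
  rw [min_eq_right hx1, min_eq_right ((div_le_one hxy).2 hbudget),
    max_eq_right (div_pos hβ hx).le, max_eq_right (div_pos hβ hxy).le]
  field_simp [(pos_of_mul_pos_right hxy hQ).ne']

lemma mul_budgetWeight_succ_le (ha : a t ω ∈ Set.Icc 0 1) :
    (1 - a t ω) * budgetWeight α a 1 (t + 1) ω ≤ budgetWeight α a 1 t ω := by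
  have hw := budgetWeight_mem (α := α) (a := a) (t := t + 1) (ω := ω) ⟨zero_le_one, le_rfl⟩
  simp only [budgetWeight, survivalProd_succ] at hw ⊢
  set x := survivalProd a t ω
  set y := 1 - a t ω
  have hy : 0 ≤ y := sub_nonneg.2 ha.2
  by_cases hx : 0 < x
  · rw [if_pos hx]
    by_cases hxy : 0 < x * y
    · rw [if_pos hxy, mul_max_of_nonneg _ _ hy, mul_min_of_nonneg _ _ hy, mul_zero, mul_one,
        mul_div_assoc', mul_comm x y, mul_div_mul_left _ _ (pos_of_mul_pos_right hxy hx.le).ne']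
      gcongr
      exact sub_le_self _ ha.1
    · have hy0 : y = 0 := le_antisymm (not_lt.1 fun h => hxy (mul_pos hx h)) hy
      rw [hy0, zero_mul]
      exact le_max_left _ _
  · rw [if_neg hx]
    exact mul_le_one₀ (sub_le_self _ ha.1) hw.1 hw.2

lemma budgetWeight_eq_one (h : survivalProd a t ω = 1 - α) : budgetWeight α a 1 t ω = 1 := by
  unfold budgetWeight
  split_ifs with hpos
  · rw [← h, div_self hpos.ne']
    norm_num
  · rfl

lemma measurable_budgetWeight {M : MeasurableSpace Ω} {z : ℝ}
    (h : ∀ s < t, Measurable[M] (a s)) : Measurable[M] (budgetWeight α a z t) := by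
  have hQ : Measurable[M] (survivalProd a t) :=
    Finset.measurable_prod _ fun s hs => measurable_const.sub (h s (mem_range.1 hs))
  exact Measurable.ite (measurableSet_lt measurable_const hQ)
    (measurable_const.max (measurable_const.min (measurable_const.div hQ))) measurable_const

lemma measurable_budgetWeight_succ_histSigma {G : ℕ → MeasurableSpace Ω} {R : ℕ → Set Ω}
    {m : ℕ} {z : ℝ} (hG_mono : ∀ s t : ℕ, s ≤ t → G s ≤ G t)
    (ha_meas : ∀ t ≤ m, Measurable[G t] (a t)) (ht : t ≤ m) :
    Measurable[histSigma G R t] (budgetWeight α a z (t + 1)) :=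
  measurable_budgetWeight fun s hs =>
    (ha_meas s (by omega)).mono ((hG_mono s t (by omega)).trans le_sup_left) le_rfl

end Weights

section Events

variable {R : ℕ → Set Ω} {t : ℕ}

@[simp]
lemma noRejectBefore_zero : noRejectBefore R 0 = Set.univ := by simp [noRejectBefore]

lemma noRejectBefore_succ : noRejectBefore R (t + 1) = noRejectBefore R t ∩ (R t)ᶜ := by
  simp [noRejectBefore, range_add_one, Set.inter_comm]

lemma pairwise_disjoint_firstReject : Pairwise (Function.onFun Disjoint (firstReject R)) := by
  refine (pairwise_disjoint_on _).2 fun s t hst => Set.disjoint_left.2 ?_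
  rintro ω ⟨hs, -⟩ ⟨-, ht⟩
  exact Set.mem_iInter₂.1 ht s (mem_range.2 hst) hs

lemma measurableSet_noRejectBefore_histSigma {G : ℕ → MeasurableSpace Ω} :
    MeasurableSet[histSigma G R t] (noRejectBefore R t) :=
  Finset.measurableSet_biInter _ fun _ hs =>
    (le_sup_right.trans' (le_biSup (fun s => MeasurableSpace.generateFrom {R s}) hs) _
      (MeasurableSpace.measurableSet_generateFrom rfl)).compl

lemma histSigma_le [m0 : MeasurableSpace Ω] {G : ℕ → MeasurableSpace Ω} (hG : G t ≤ m0)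
    (hR : ∀ s < t, MeasurableSet (R s)) : histSigma G R t ≤ m0 :=
  sup_le hG <| iSup₂_le fun s hs =>
    MeasurableSpace.generateFrom_le fun _ h => h ▸ hR s (mem_range.1 hs)

end Events

lemma indicator_mem_Icc {s : Set Ω} {f : Ω → ℝ} (hf : ∀ ω ∈ s, f ω ∈ Set.Icc 0 1) (ω : Ω) :
    s.indicator f ω ∈ Set.Icc (0 : ℝ) 1 := by
  by_cases h : ω ∈ s
  · simpa [h] using hf ω h
  · simp [h]

section Integrability

variable [MeasurableSpace Ω] {μ : Measure Ω}

lemma integrable_indicator_one_sub [IsFiniteMeasure μ] {s : Set Ω} {v : Ω → ℝ}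
    (hs : MeasurableSet s) (hv : Measurable v) (hv01 : ∀ ω, v ω ∈ Set.Icc 0 1) :
    Integrable (s.indicator (1 - v)) μ :=
  Integrable.of_mem_Icc 0 1 ((measurable_const.sub hv).indicator hs).aemeasurable <|
    ae_of_all _ <| indicator_mem_Icc fun ω _ =>
      ⟨sub_nonneg.2 (hv01 ω).2, sub_le_self _ (hv01 ω).1⟩

lemma integrable_indicator_mul {s : Set Ω} {c f : Ω → ℝ} (hs : MeasurableSet s)
    (hc : Measurable c) (hc01 : ∀ ω, c ω ∈ Set.Icc 0 1) (hf : Integrable f μ) :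
    Integrable (fun ω => s.indicator c ω * f ω) μ :=
  hf.bdd_mul (hc.indicator hs).aestronglyMeasurable <| ae_of_all _ fun ω => by
    have hω := indicator_mem_Icc (s := s) (fun ω _ => hc01 ω) ω
    rw [Real.norm_eq_abs, abs_le]
    exact ⟨by linarith [hω.1], hω.2⟩

lemma integrable_of_add_mem_Icc [IsFiniteMeasure μ] {a δ : Ω → ℝ} (hδ : Measurable δ)
    (ha : ∀ ω, a ω ∈ Set.Icc 0 1) (haδ : ∀ ω, a ω + δ ω ∈ Set.Icc 0 1) : Integrable δ μ :=
  Integrable.of_mem_Icc (-1) 1 hδ.aemeasurable <| ae_of_all _ fun ω =>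
    ⟨by linarith [(ha ω).2, (haδ ω).1], by linarith [(ha ω).1, (haδ ω).2]⟩

lemma potential_zero {R : ℕ → Set Ω} {v : ℕ → Ω → ℝ} :
    potential μ R v 0 = ∫ ω, (1 - v 0 ω) ∂μ := by
  simp [potential]

end Integrability

section Step

variable [m0 : MeasurableSpace Ω] {μ : Measure Ω} [IsFiniteMeasure μ]
  {G : ℕ → MeasurableSpace Ω} {N R : ℕ → Set Ω} {t : ℕ} {v : Ω → ℝ}

lemma condExp_firstReject_add_eq_stepValue (hF : histSigma G R t ≤ m0)
    (hN : MeasurableSet[histSigma G R t] (N t)) (hR : MeasurableSet (R t))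
    (hv : Measurable[histSigma G R t] v) (hv01 : ∀ ω, v ω ∈ Set.Icc 0 1) :
    μ[(firstReject R t ∩ N t).indicator 1 + (noRejectBefore R (t + 1)).indicator (1 - v) |
        histSigma G R t]
      =ᵐ[μ] stepValue N R t (μ[(R t).indicator fun _ => 1 | histSigma G R t]) v := by
  set D := noRejectBefore R t
  set f : Ω → ℝ := (R t).indicator fun _ => 1
  set k : Ω → ℝ := D.indicator (1 - v)
  set g : Ω → ℝ := D.indicator fun ω => (N t).indicator 1 ω - (1 - v ω)
  have hD : MeasurableSet[histSigma G R t] D := measurableSet_noRejectBefore_histSigma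
  have hk : StronglyMeasurable[histSigma G R t] k :=
    ((measurable_const.sub hv).indicator hD).stronglyMeasurable
  have hg : StronglyMeasurable[histSigma G R t] g :=
    (((measurable_const.indicator hN).sub (measurable_const.sub hv)).indicator
      hD).stronglyMeasurable
  have hf : Integrable f μ := (integrable_const 1).indicator hR
  have hg_bound : ∀ ω, ‖g ω‖ ≤ 1 := fun ω => by
    have hvω := hv01 ω
    by_cases hωD : ω ∈ D <;> by_cases hωN : ω ∈ N t <;>
      simp [g, hωD, hωN, abs_le] <;> constructor <;> linarith [hvω.1, hvω.2]
  have hk_int : Integrable k μ :=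
    integrable_indicator_one_sub (hF _ hD) (hv.mono hF le_rfl) hv01
  -- `k` and `g` are known at time `t`, so conditioning only replaces `f` by its expectation.
  have hX : (firstReject R t ∩ N t).indicator 1 + (noRejectBefore R (t + 1)).indicator (1 - v)
      = k + g * f := by
    ext ω
    by_cases hωD : ω ∈ D <;> by_cases hωR : ω ∈ R t <;> by_cases hωN : ω ∈ N t <;>
      simp [k, g, f, D, firstReject, noRejectBefore_succ, hωD, hωR, hωN]
  have hgf_int : Integrable (g * f) μ :=
    hf.bdd_mul (hg.mono hF).aestronglyMeasurable (ae_of_all _ hg_bound)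
  rw [hX]
  filter_upwards [condExp_add hk_int hgf_int (histSigma G R t),
    condExp_stronglyMeasurable_mul_of_bound hF hg hf 1 (ae_of_all _ hg_bound)] with ω h1 h2
  rw [h1, Pi.add_apply, condExp_of_stronglyMeasurable hF hk hk_int, h2]
  by_cases hωD : ω ∈ D <;> by_cases hωN : ω ∈ N t <;>
    simp [stepValue, k, g, D, hωD, hωN] <;> ring

lemma measurableSet_firstReject_inter (hF : histSigma G R t ≤ m0)
    (hN : MeasurableSet[histSigma G R t] (N t)) (hR : MeasurableSet (R t)) :
    MeasurableSet (firstReject R t ∩ N t) :=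
  (hR.inter (hF _ measurableSet_noRejectBefore_histSigma)).inter (hF _ hN)

lemma measureReal_firstReject_add_integral_eq (hF : histSigma G R t ≤ m0)
    (hN : MeasurableSet[histSigma G R t] (N t)) (hR : MeasurableSet (R t))
    (hv : Measurable[histSigma G R t] v) (hv01 : ∀ ω, v ω ∈ Set.Icc 0 1) :
    μ.real (firstReject R t ∩ N t)
        + ∫ ω, (noRejectBefore R (t + 1)).indicator (1 - v) ω ∂μ
      = ∫ ω, stepValue N R t (μ[(R t).indicator fun _ => 1 | histSigma G R t]) v ω ∂μ := by
  have hD : MeasurableSet (noRejectBefore R (t + 1)) := by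
    rw [noRejectBefore_succ]
    exact (hF _ measurableSet_noRejectBefore_histSigma).inter hR.compl
  have hint : Integrable ((noRejectBefore R (t + 1)).indicator (1 - v)) μ :=
    integrable_indicator_one_sub hD (hv.mono hF le_rfl) hv01
  have hS := measurableSet_firstReject_inter hF hN hR
  have hS_int : Integrable ((firstReject R t ∩ N t).indicator (1 : Ω → ℝ)) μ :=
    (integrable_const 1).indicator hS
  rw [← integral_indicator_one hS, ← integral_add hS_int hint,
    ← integral_condExp hF]
  exact integral_congr_ae (condExp_firstReject_add_eq_stepValue hF hN hR hv hv01)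

lemma integrable_stepValue (hF : histSigma G R t ≤ m0)
    (hN : MeasurableSet[histSigma G R t] (N t)) (hR : MeasurableSet (R t))
    (hv : Measurable[histSigma G R t] v) (hv01 : ∀ ω, v ω ∈ Set.Icc 0 1) :
    Integrable (stepValue N R t (μ[(R t).indicator fun _ => 1 | histSigma G R t]) v) μ :=
  integrable_condExp.congr (condExp_firstReject_add_eq_stepValue hF hN hR hv hv01)

end Step

lemma sum_add_le_add_sum {p x b : ℕ → ℝ} {n : ℕ} (h : ∀ t < n, p t + x (t + 1) ≤ x t + b t) :
    ∑ t ∈ range n, p t + x n ≤ x 0 + ∑ t ∈ range n, b t := by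
  induction n with
  | zero => simp
  | succ n ih =>
    rw [sum_range_succ, sum_range_succ]
    linarith [ih fun t ht => h t (by omega), h n (by omega)]

lemma add_sum_le_sum_add {p x b : ℕ → ℝ} {n : ℕ} (h : ∀ t < n, x t + b t ≤ p t + x (t + 1)) :
    x 0 + ∑ t ∈ range n, b t ≤ ∑ t ∈ range n, p t + x n := by
  induction n with
  | zero => simp
  | succ n ih =>
    rw [sum_range_succ, sum_range_succ]
    linarith [ih fun t ht => h t (by omega), h n (by omega)]

section StepBounds

variable {N R : ℕ → Set Ω} {t : ℕ} {q v₀ v₁ : Ω → ℝ} {a δ : Ω → ℝ} {ω : Ω}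

lemma stepValue_le (hv₁ : v₁ ω ∈ Set.Icc 0 1)
    (ha : 0 ≤ a ω) (hv : v₀ ω ≤ (1 - a ω) * v₁ ω) (hq₀ : 0 ≤ q ω)
    (hq : ω ∈ N t ∩ noRejectBefore R t → q ω ≤ a ω + δ ω) :
    stepValue N R t q v₁ ω
      ≤ (noRejectBefore R t).indicator (1 - v₀) ω
        + (N t ∩ noRejectBefore R t).indicator v₁ ω * δ ω := by
  obtain ⟨hv₁0, hv₁1⟩ := hv₁
  by_cases hD : ω ∈ noRejectBefore R t
  · by_cases hN : ω ∈ N t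
    · simp only [stepValue, Set.indicator_of_mem hD, Set.indicator_of_mem hN,
        Set.indicator_of_mem (Set.mem_inter hN hD), Pi.one_apply, Pi.sub_apply]
      nlinarith [mul_le_mul_of_nonneg_left (hq ⟨hN, hD⟩) hv₁0]
    · simp only [stepValue, Set.indicator_of_mem hD, Set.indicator_of_notMem hN,
        Set.indicator_of_notMem (show ω ∉ N t ∩ noRejectBefore R t from fun h => hN h.1),
        Pi.sub_apply, Pi.one_apply]
      nlinarith
  · simp [stepValue, hD]

lemma le_stepValue (hv₁ : v₁ ω ∈ Set.Icc 0 1)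
    (hv : (1 - a ω) * v₁ ω ≤ v₀ ω) (hN : ω ∈ N t)
    (hq : ω ∈ N t ∩ noRejectBefore R t → q ω = a ω + δ ω) :
    (noRejectBefore R t).indicator (1 - v₀) ω
        + (noRejectBefore R t ∩ {ω | δ ω < 0}).indicator 1 ω * δ ω
      ≤ stepValue N R t q v₁ ω := by
  obtain ⟨hv₁0, hv₁1⟩ := hv₁
  by_cases hD : ω ∈ noRejectBefore R t
  · simp only [stepValue, Set.indicator_of_mem hD, Set.indicator_of_mem hN, hq ⟨hN, hD⟩,
      Pi.sub_apply, Pi.one_apply]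
    by_cases hδ : δ ω < 0
    · simp only [Set.indicator_of_mem (Set.mem_inter hD (show ω ∈ {ω | δ ω < 0} from hδ)),
        Pi.one_apply]
      nlinarith
    · simp only [Set.indicator_of_notMem (show ω ∉ noRejectBefore R t ∩ {ω | δ ω < 0} from
        fun h => hδ h.2)]
      nlinarith
  · simp [stepValue, hD]

end StepBounds

section Chain

variable [m0 : MeasurableSpace Ω] {μ : Measure Ω} [IsFiniteMeasure μ]
  {G : ℕ → MeasurableSpace Ω} {N R : ℕ → Set Ω} {a δ v : ℕ → Ω → ℝ} {m : ℕ}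

lemma measureReal_biUnion_firstReject_inter (hF : ∀ t ≤ m, histSigma G R t ≤ m0)
    (hN : ∀ t ≤ m, MeasurableSet[histSigma G R t] (N t)) (hR : ∀ t ≤ m, MeasurableSet (R t)) :
    μ.real (⋃ t ∈ range (m + 1), firstReject R t ∩ N t)
      = ∑ t ∈ range (m + 1), μ.real (firstReject R t ∩ N t) :=
  measureReal_biUnion_finset
    (fun s _ t _ hst => (pairwise_disjoint_firstReject hst).mono Set.inter_subset_left
      Set.inter_subset_left)
    fun t ht => measurableSet_firstReject_inter (hF t (by simpa [Nat.lt_succ_iff] using ht))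
      (hN t (by simpa [Nat.lt_succ_iff] using ht)) (hR t (by simpa [Nat.lt_succ_iff] using ht))

lemma measureReal_biUnion_firstReject_inter_le (hF : ∀ t ≤ m, histSigma G R t ≤ m0)
    (hN : ∀ t ≤ m, MeasurableSet[histSigma G R t] (N t)) (hR : ∀ t ≤ m, MeasurableSet (R t))
    (hv : ∀ t ≤ m, Measurable (v t)) (hvF : ∀ t ≤ m, Measurable[histSigma G R t] (v (t + 1)))
    (hv01 : ∀ t ω, v t ω ∈ Set.Icc 0 1) (ha : ∀ t ≤ m, ∀ ω, 0 ≤ a t ω)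
    (hv_le : ∀ t ≤ m, ∀ᵐ ω ∂μ, v t ω ≤ (1 - a t ω) * v (t + 1) ω)
    (hδ : ∀ t ≤ m, Integrable (δ t) μ)
    (hvalid : ∀ t ≤ m, ∀ᵐ ω ∂μ, ω ∈ N t ∩ noRejectBefore R t →
      μ[(R t).indicator (fun _ => 1) | histSigma G R t] ω ≤ a t ω + δ t ω) :
    μ.real (⋃ t ∈ range (m + 1), firstReject R t ∩ N t)
      ≤ ∫ ω, (1 - v 0 ω) ∂μ + ∫ ω, ∑ t ∈ range (m + 1),
          (N t ∩ noRejectBefore R t).indicator (v (t + 1)) ω * δ t ω ∂μ := by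
  have hD : ∀ t ≤ m, MeasurableSet (noRejectBefore R t) :=
    fun t ht => hF t ht _ measurableSet_noRejectBefore_histSigma
  have hc : ∀ t ≤ m, Integrable
      (fun ω => (N t ∩ noRejectBefore R t).indicator (v (t + 1)) ω * δ t ω) μ :=
    fun t ht => integrable_indicator_mul ((hF t ht _ (hN t ht)).inter (hD t ht))
      ((hvF t ht).mono (hF t ht) le_rfl) (hv01 _) (hδ t ht)
  have hstep : ∀ t < m + 1, μ.real (firstReject R t ∩ N t) + potential μ R v (t + 1)
      ≤ potential μ R v t
        + ∫ ω, (N t ∩ noRejectBefore R t).indicator (v (t + 1)) ω * δ t ω ∂μ := by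
    intro t ht
    replace ht : t ≤ m := by omega
    have hpot := integrable_indicator_one_sub (μ := μ) (hD t ht) (hv t ht) (hv01 t)
    rw [potential, potential, ← integral_add hpot (hc t ht),
      measureReal_firstReject_add_integral_eq (hF t ht) (hN t ht) (hR t ht) (hvF t ht) (hv01 _)]
    refine integral_mono_ae (integrable_stepValue (hF t ht) (hN t ht) (hR t ht) (hvF t ht)
      (hv01 _)) (hpot.add (hc t ht)) ?_
    have hq₀ := condExp_nonneg (m := histSigma G R t) (μ := μ) <| ae_of_all _
      fun ω => (indicator_mem_Icc (s := R t) (fun _ _ => ⟨zero_le_one, le_rfl⟩) ω).1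
    filter_upwards [hv_le t ht, hvalid t ht, hq₀] with ω hle hq hq₀
    exact stepValue_le (hv01 _ ω) (ha t ht ω) hle hq₀ hq
  have hend : 0 ≤ potential μ R v (m + 1) :=
    integral_nonneg fun ω => (indicator_mem_Icc (fun ω _ =>
      ⟨sub_nonneg.2 (hv01 _ ω).2, sub_le_self _ (hv01 _ ω).1⟩) ω).1
  rw [measureReal_biUnion_firstReject_inter hF hN hR, ← potential_zero,
    integral_finsetSum _ fun t ht => hc t (Nat.lt_succ_iff.1 (mem_range.1 ht))]
  linarith [sum_add_le_add_sum hstep]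

lemma le_measureReal_biUnion_firstReject_inter (hF : ∀ t ≤ m, histSigma G R t ≤ m0)
    (hN : ∀ t ≤ m, MeasurableSet[histSigma G R t] (N t)) (hR : ∀ t ≤ m, MeasurableSet (R t))
    (hv : ∀ t ≤ m, Measurable (v t)) (hvF : ∀ t ≤ m, Measurable[histSigma G R t] (v (t + 1)))
    (hv01 : ∀ t ω, v t ω ∈ Set.Icc 0 1)
    (hv_ge : ∀ t ≤ m, ∀ᵐ ω ∂μ, (1 - a t ω) * v (t + 1) ω ≤ v t ω)
    (hv_end : ∀ᵐ ω ∂μ, v (m + 1) ω = 1)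
    (hδm : ∀ t ≤ m, Measurable (δ t)) (hδ : ∀ t ≤ m, Integrable (δ t) μ)
    (hexact : ∀ t ≤ m, ∀ᵐ ω ∂μ, ω ∈ N t ∩ noRejectBefore R t →
      μ[(R t).indicator (fun _ => 1) | histSigma G R t] ω = a t ω + δ t ω)
    (hnull : ∀ t ≤ m, ∀ᵐ ω ∂μ, ω ∈ N t) :
    ∫ ω, (1 - v 0 ω) ∂μ + ∫ ω, ∑ t ∈ range (m + 1),
          (noRejectBefore R t ∩ {ω | δ t ω < 0}).indicator 1 ω * δ t ω ∂μ
      ≤ μ.real (⋃ t ∈ range (m + 1), firstReject R t ∩ N t) := by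
  have hD : ∀ t ≤ m, MeasurableSet (noRejectBefore R t) :=
    fun t ht => hF t ht _ measurableSet_noRejectBefore_histSigma
  have hc : ∀ t ≤ m, Integrable
      (fun ω => (noRejectBefore R t ∩ {ω | δ t ω < 0}).indicator 1 ω * δ t ω) μ :=
    fun t ht => integrable_indicator_mul ((hD t ht).inter (measurableSet_lt (hδm t ht)
      measurable_const)) measurable_const (fun _ => ⟨zero_le_one, le_rfl⟩) (hδ t ht)
  have hstep : ∀ t < m + 1, potential μ R v t
        + ∫ ω, (noRejectBefore R t ∩ {ω | δ t ω < 0}).indicator 1 ω * δ t ω ∂μ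
      ≤ μ.real (firstReject R t ∩ N t) + potential μ R v (t + 1) := by
    intro t ht
    replace ht : t ≤ m := by omega
    have hpot := integrable_indicator_one_sub (μ := μ) (hD t ht) (hv t ht) (hv01 t)
    rw [potential, potential, ← integral_add hpot (hc t ht),
      measureReal_firstReject_add_integral_eq (hF t ht) (hN t ht) (hR t ht) (hvF t ht) (hv01 _)]
    refine integral_mono_ae (hpot.add (hc t ht))
      (integrable_stepValue (hF t ht) (hN t ht) (hR t ht) (hvF t ht) (hv01 _)) ?_
    filter_upwards [hv_ge t ht, hexact t ht, hnull t ht] with ω hge hq hωN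
    exact le_stepValue (hv01 _ ω) hge hωN hq
  have hend : potential μ R v (m + 1) = 0 :=
    integral_eq_zero_of_ae <| by
      filter_upwards [hv_end] with ω hω
      simp [hω]
  rw [measureReal_biUnion_firstReject_inter hF hN hR, ← potential_zero,
    integral_finsetSum _ fun t ht => hc t (Nat.lt_succ_iff.1 (mem_range.1 ht))]
  linarith [add_sum_le_sum_add hstep]

end Chain

lemma abs_sum_mul_le_sum_abs {ι : Type*} {s : Finset ι} {c δ : ι → ℝ}
    (hc : ∀ t, c t ∈ Set.Icc 0 1) : |∑ t ∈ s, c t * δ t| ≤ ∑ t ∈ s, |δ t| :=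
  (abs_sum_le_sum_abs _ _).trans <| sum_le_sum fun t _ => by
    rw [abs_mul]
    exact mul_le_of_le_one_left (abs_nonneg _) (abs_le.2 ⟨by linarith [(hc t).1], (hc t).2⟩)

section Coefficients

variable [MeasurableSpace Ω] {μ : Measure Ω} {ι : Type*} {s : Finset ι} {δ : ι → Ω → ℝ}

lemma integral_sum_mul_le_integral_sum_abs {c : ι → Ω → ℝ} (hc : ∀ t ω, c t ω ∈ Set.Icc 0 1)
    (hi : Integrable (fun ω => ∑ t ∈ s, c t ω * δ t ω) μ) (hδ : ∀ t ∈ s, Integrable (δ t) μ) :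
    ∫ ω, ∑ t ∈ s, c t ω * δ t ω ∂μ ≤ ∫ ω, ∑ t ∈ s, |δ t ω| ∂μ :=
  integral_mono hi (integrable_finsetSum _ fun t ht => (hδ t ht).abs) fun ω =>
    (le_abs_self _).trans (abs_sum_mul_le_sum_abs fun t => hc t ω)

lemma exists_coeff_le_integral_sum_and_eq {c₁ c₂ : ι → Ω → ℝ}
    (hc₁ : ∀ t ω, c₁ t ω ∈ Set.Icc 0 1) (hc₂ : ∀ t ω, c₂ t ω ∈ Set.Icc 0 1)
    (hi₁ : Integrable (fun ω => ∑ t ∈ s, c₁ t ω * δ t ω) μ)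
    (hi₂ : Integrable (fun ω => ∑ t ∈ s, c₂ t ω * δ t ω) μ) {p : ℝ}
    (hp : p ≤ ∫ ω, ∑ t ∈ s, c₂ t ω * δ t ω ∂μ) :
    ∃ c : ι → Ω → ℝ, (∀ t ω, c t ω ∈ Set.Icc 0 1) ∧ p ≤ ∫ ω, ∑ t ∈ s, c t ω * δ t ω ∂μ ∧
      (∫ ω, ∑ t ∈ s, c₁ t ω * δ t ω ∂μ ≤ p → ∫ ω, ∑ t ∈ s, c t ω * δ t ω ∂μ = p) := by
  by_cases hp₁ : ∫ ω, ∑ t ∈ s, c₁ t ω * δ t ω ∂μ ≤ p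
  · obtain ⟨l₁, l₂, hl₁, hl₂, hl, rfl⟩ : p ∈ segment ℝ (∫ ω, ∑ t ∈ s, c₁ t ω * δ t ω ∂μ)
        (∫ ω, ∑ t ∈ s, c₂ t ω * δ t ω ∂μ) := by
      rw [segment_eq_Icc (hp₁.trans hp)]
      exact ⟨hp₁, hp⟩
    have hint : ∫ ω, ∑ t ∈ s, (l₁ * c₁ t ω + l₂ * c₂ t ω) * δ t ω ∂μ
        = l₁ • ∫ ω, ∑ t ∈ s, c₁ t ω * δ t ω ∂μ + l₂ • ∫ ω, ∑ t ∈ s, c₂ t ω * δ t ω ∂μ := by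
      rw [smul_eq_mul, smul_eq_mul, ← integral_const_mul, ← integral_const_mul,
        ← integral_add (hi₁.const_mul l₁) (hi₂.const_mul l₂)]
      congr 1 with ω
      simp only [mul_sum, ← sum_add_distrib]
      exact sum_congr rfl fun t _ => by ring
    exact ⟨fun t ω => l₁ * c₁ t ω + l₂ * c₂ t ω,
      fun t ω => convex_Icc 0 1 (hc₁ t ω) (hc₂ t ω) hl₁ hl₂ hl, hint.ge, fun _ => hint⟩
  · exact ⟨c₂, hc₂, hp, fun h => absurd h hp₁⟩

end Coefficients

section Bounds

variable [m0 : MeasurableSpace Ω] {μ : Measure Ω}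
  {G : ℕ → MeasurableSpace Ω} {N R : ℕ → Set Ω} {a δ : ℕ → Ω → ℝ} {α z : ℝ} {m t : ℕ}

lemma measurable_budgetWeight_of_le (hG_le : ∀ t, G t ≤ m0)
    (ha_meas : ∀ t ≤ m, Measurable[G t] (a t)) (ht : t ≤ m) :
    Measurable (budgetWeight α a z t) :=
  measurable_budgetWeight fun s hs => (ha_meas s (by omega)).mono (hG_le s) le_rfl

variable [IsProbabilityMeasure μ]

theorem exists_coeff_measureReal_le
    (hG_mono : ∀ s t : ℕ, s ≤ t → G s ≤ G t) (hG_le : ∀ t, G t ≤ m0)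
    (hN_meas : ∀ t ≤ m, MeasurableSet[G t] (N t)) (hR_meas : ∀ t ≤ m, MeasurableSet (R t))
    (ha_meas : ∀ t ≤ m, Measurable[G t] (a t)) (hδ_meas : ∀ t ≤ m, Measurable[G t] (δ t))
    (ha_mem : ∀ t ≤ m, ∀ ω, a t ω ∈ Set.Icc 0 1)
    (ha_tilde_mem : ∀ t ≤ m, ∀ ω, a t ω + δ t ω ∈ Set.Icc 0 1)
    (hbudget : ∀ᵐ ω ∂μ, 1 - survivalProd a (m + 1) ω ≤ α)
    (hvalid : ∀ t ≤ m, ∀ᵐ ω ∂μ, ω ∈ N t ∩ noRejectBefore R t →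
      μ[(R t).indicator (fun _ => 1) | histSigma G R t] ω ≤ a t ω + δ t ω) :
    ∃ c : ℕ → Ω → ℝ, (∀ t ω, c t ω ∈ Set.Icc 0 1) ∧
      Integrable (fun ω => ∑ t ∈ range (m + 1), c t ω * δ t ω) μ ∧
      μ.real (⋃ t ∈ range (m + 1), firstReject R t ∩ N t)
        ≤ α + ∫ ω, ∑ t ∈ range (m + 1), c t ω * δ t ω ∂μ := by
  have hF : ∀ t ≤ m, histSigma G R t ≤ m0 := fun t ht =>
    histSigma_le (hG_le t) fun s hs => hR_meas s (by omega)
  have hNF : ∀ t ≤ m, MeasurableSet[histSigma G R t] (N t) := fun t ht =>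
    le_sup_left (a := G t) _ (hN_meas t ht)
  have hδ : ∀ t ≤ m, Integrable (δ t) μ := fun t ht => integrable_of_add_mem_Icc
    ((hδ_meas t ht).mono (hG_le t) le_rfl) (ha_mem t ht) (ha_tilde_mem t ht)
  have hQ : ∀ t ≤ m + 1, ∀ ω, survivalProd a t ω ∈ Set.Icc 0 1 := fun t ht ω =>
    survivalProd_mem_Icc fun s hs => ha_mem s (by omega) ω
  have hv_le : ∀ t ≤ m, ∀ᵐ ω ∂μ,
      budgetWeight α a 0 t ω ≤ (1 - a t ω) * budgetWeight α a 0 (t + 1) ω := fun t ht => by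
    filter_upwards [hbudget] with ω hω
    have hQ_le := survivalProd_le_of_le (show t + 1 ≤ m + 1 by omega)
      fun s hs => ha_mem s (by omega) ω
    exact (budgetWeight_eq_mul_succ (ha_mem t ht ω) (hQ t (by omega) ω).1 (by linarith)).le
  have hα : 0 ≤ α := by
    obtain ⟨ω, hω⟩ := hbudget.exists
    linarith [(hQ (m + 1) le_rfl ω).2]
  refine ⟨fun t => (N t ∩ noRejectBefore R t).indicator (budgetWeight α a 0 (t + 1)),
    fun t => indicator_mem_Icc fun _ _ => budgetWeight_mem ⟨le_rfl, zero_le_one⟩,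
    integrable_finsetSum _ fun t ht => ?_, ?_⟩
  · have ht : t ≤ m := Nat.lt_succ_iff.1 (mem_range.1 ht)
    exact integrable_indicator_mul ((hF t ht _ (hNF t ht)).inter
        (hF t ht _ measurableSet_noRejectBefore_histSigma))
      ((measurable_budgetWeight_succ_histSigma hG_mono ha_meas ht).mono (hF t ht) le_rfl)
      (fun _ => budgetWeight_mem ⟨le_rfl, zero_le_one⟩) (hδ t ht)
  refine (measureReal_biUnion_firstReject_inter_le hF hNF hR_meas
    (fun t => measurable_budgetWeight_of_le hG_le ha_meas)
    (fun t => measurable_budgetWeight_succ_histSigma hG_mono ha_meas)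
    (fun _ _ => budgetWeight_mem ⟨le_rfl, zero_le_one⟩) (fun t ht ω => (ha_mem t ht ω).1) hv_le
    hδ hvalid).trans (add_le_add ?_ le_rfl)
  simp only [budgetWeight_zero, integral_const, probReal_univ, one_smul,
    min_eq_right (by linarith : 1 - α ≤ 1)]
  linarith [le_max_right 0 (1 - α)]

theorem exists_coeff_le_measureReal_of_exact
    (hG_mono : ∀ s t : ℕ, s ≤ t → G s ≤ G t) (hG_le : ∀ t, G t ≤ m0)
    (hN_meas : ∀ t ≤ m, MeasurableSet[G t] (N t)) (hR_meas : ∀ t ≤ m, MeasurableSet (R t))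
    (ha_meas : ∀ t ≤ m, Measurable[G t] (a t)) (hδ_meas : ∀ t ≤ m, Measurable[G t] (δ t))
    (ha_mem : ∀ t ≤ m, ∀ ω, a t ω ∈ Set.Icc 0 1)
    (ha_tilde_mem : ∀ t ≤ m, ∀ ω, a t ω + δ t ω ∈ Set.Icc 0 1) :
    ∃ c : ℕ → Ω → ℝ, (∀ t ω, c t ω ∈ Set.Icc 0 1) ∧
      Integrable (fun ω => ∑ t ∈ range (m + 1), c t ω * δ t ω) μ ∧
      ((∀ t ≤ m, ∀ᵐ ω ∂μ, ω ∈ N t ∩ noRejectBefore R t →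
          μ[(R t).indicator (fun _ => 1) | histSigma G R t] ω = a t ω + δ t ω) →
        (∀ᵐ ω ∂μ, 1 - survivalProd a (m + 1) ω = α) →
        (∀ t ≤ m, ∀ᵐ ω ∂μ, ω ∈ N t) →
        α + ∫ ω, ∑ t ∈ range (m + 1), c t ω * δ t ω ∂μ
          ≤ μ.real (⋃ t ∈ range (m + 1), firstReject R t ∩ N t)) := by
  have hF : ∀ t ≤ m, histSigma G R t ≤ m0 := fun t ht =>
    histSigma_le (hG_le t) fun s hs => hR_meas s (by omega)
  have hNF : ∀ t ≤ m, MeasurableSet[histSigma G R t] (N t) := fun t ht =>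
    le_sup_left (a := G t) _ (hN_meas t ht)
  have hδm : ∀ t ≤ m, Measurable (δ t) := fun t ht => (hδ_meas t ht).mono (hG_le t) le_rfl
  have hδ : ∀ t ≤ m, Integrable (δ t) μ := fun t ht =>
    integrable_of_add_mem_Icc (hδm t ht) (ha_mem t ht) (ha_tilde_mem t ht)
  refine ⟨fun t => (noRejectBefore R t ∩ {ω | δ t ω < 0}).indicator 1,
    fun t => indicator_mem_Icc fun _ _ => ⟨zero_le_one, le_rfl⟩,
    integrable_finsetSum _ fun t ht => ?_, fun hexact hbudget hnull => ?_⟩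
  · have ht : t ≤ m := Nat.lt_succ_iff.1 (mem_range.1 ht)
    exact integrable_indicator_mul ((hF t ht _ measurableSet_noRejectBefore_histSigma).inter
      (measurableSet_lt (hδm t ht) measurable_const)) measurable_const
      (fun _ => ⟨zero_le_one, le_rfl⟩) (hδ t ht)
  have hα : 0 ≤ 1 - α ∧ 1 - α ≤ 1 := by
    obtain ⟨ω, hω⟩ := hbudget.exists
    have hQ := survivalProd_mem_Icc fun s (hs : s < m + 1) => ha_mem s (by omega) ω
    constructor <;> linarith [hQ.1, hQ.2]
  refine le_trans (add_le_add ?_ le_rfl) (le_measureReal_biUnion_firstReject_inter hF hNF hR_meas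
    (fun t => measurable_budgetWeight_of_le hG_le ha_meas)
    (fun t => measurable_budgetWeight_succ_histSigma hG_mono ha_meas)
    (fun _ _ => budgetWeight_mem ⟨zero_le_one, le_rfl⟩)
    (fun t ht => ae_of_all _ fun ω => mul_budgetWeight_succ_le (ha_mem t ht ω))
    (hbudget.mono fun ω hω => budgetWeight_eq_one (by linarith)) hδm hδ hexact hnull)
  simp only [budgetWeight_zero, integral_const, probReal_univ, one_smul, min_eq_right hα.2,
    max_eq_right hα.1]
  linarith

end Bounds

end SequentialTest

open SequentialTest

/-- **Approximate sequential error control.** For a conditionally valid testing sequence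
with achieved levels `α̃_t = α_t + δ_t` (targets `α_t ∈ [0,1]`, approximation errors `δ_t`,
both `G_t`-measurable) whose targets form a valid `α`-budget, there is a random variable
`ε₀ = ∑_t c_t δ_t` with random coefficients `c_t ∈ [0,1]` (so `|ε₀| ≤ ∑_t |δ_t|`) such that
`P(H_τ = 0) ≤ α + E[ε₀]`; consequently `P(H_τ = 0) ≤ α + E[∑_t |δ_t|]`.  Under conditional
exactness, an exact budget, and the global null, `P(H_τ = 0) = α + E[ε₀]`.
Here `N t = {H_t = 0}` and `R t = {φ_t = 1}`. -/
theorem approximate_sequential_error_control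
    {Ω : Type*} [m0 : MeasurableSpace Ω] (μ : Measure Ω) [IsProbabilityMeasure μ]
    (m : ℕ) (G : ℕ → MeasurableSpace Ω)
    (hG_mono : ∀ s t : ℕ, s ≤ t → G s ≤ G t) (hG_le : ∀ t, G t ≤ m0)
    (N R : ℕ → Set Ω) (a δ : ℕ → Ω → ℝ) (α : ℝ)
    (hN_meas : ∀ t ≤ m, MeasurableSet[G t] (N t))
    (hR_meas : ∀ t ≤ m, MeasurableSet (R t))
    (ha_meas : ∀ t ≤ m, Measurable[G t] (a t))
    (hδ_meas : ∀ t ≤ m, Measurable[G t] (δ t))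
    (ha_mem : ∀ t ≤ m, ∀ ω, a t ω ∈ Set.Icc (0 : ℝ) 1)
    (ha_tilde_mem : ∀ t ≤ m, ∀ ω, a t ω + δ t ω ∈ Set.Icc (0 : ℝ) 1)
    (hbudget : ∀ᵐ ω ∂μ, 1 - ∏ t ∈ Finset.range (m + 1), (1 - a t ω) ≤ α)
    (hvalid : ∀ t ≤ m, ∀ᵐ ω ∂μ,
      ω ∈ N t ∩ ⋂ s ∈ Finset.range t, (R s)ᶜ →
        (μ[(R t).indicator (fun _ => (1 : ℝ)) |
            (G t ⊔ ⨆ s ∈ Finset.range t, MeasurableSpace.generateFrom {R s})]) ω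
          ≤ a t ω + δ t ω) :
    (∃ c : ℕ → Ω → ℝ,
      (∀ t ω, c t ω ∈ Set.Icc (0 : ℝ) 1) ∧
      (∀ ω, |∑ t ∈ Finset.range (m + 1), c t ω * δ t ω|
          ≤ ∑ t ∈ Finset.range (m + 1), |δ t ω|) ∧
      ((μ (⋃ t ∈ Finset.range (m + 1),
            ((R t ∩ ⋂ s ∈ Finset.range t, (R s)ᶜ) ∩ N t))).toReal
        ≤ α + ∫ ω, (∑ t ∈ Finset.range (m + 1), c t ω * δ t ω) ∂μ) ∧
      ((∀ t ≤ m, ∀ᵐ ω ∂μ,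
          ω ∈ N t ∩ ⋂ s ∈ Finset.range t, (R s)ᶜ →
            (μ[(R t).indicator (fun _ => (1 : ℝ)) |
                (G t ⊔ ⨆ s ∈ Finset.range t, MeasurableSpace.generateFrom {R s})]) ω
              = a t ω + δ t ω) →
        (∀ᵐ ω ∂μ, 1 - ∏ t ∈ Finset.range (m + 1), (1 - a t ω) = α) →
        (∀ t ≤ m, ∀ᵐ ω ∂μ, ω ∈ N t) →
        (μ (⋃ t ∈ Finset.range (m + 1),
            ((R t ∩ ⋂ s ∈ Finset.range t, (R s)ᶜ) ∩ N t))).toReal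
          = α + ∫ ω, (∑ t ∈ Finset.range (m + 1), c t ω * δ t ω) ∂μ)) ∧
    ((μ (⋃ t ∈ Finset.range (m + 1),
          ((R t ∩ ⋂ s ∈ Finset.range t, (R s)ᶜ) ∩ N t))).toReal
      ≤ α + ∫ ω, (∑ t ∈ Finset.range (m + 1), |δ t ω|) ∂μ) := by
  have hδ : ∀ t ∈ Finset.range (m + 1), Integrable (δ t) μ := fun t ht =>
    have ht : t ≤ m := Nat.lt_succ_iff.1 (mem_range.1 ht)
    integrable_of_add_mem_Icc ((hδ_meas t ht).mono (hG_le t) le_rfl) (ha_mem t ht)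
      (ha_tilde_mem t ht)
  obtain ⟨cUp, hcUp, hiUp, hup⟩ := exists_coeff_measureReal_le hG_mono hG_le hN_meas hR_meas
    ha_meas hδ_meas ha_mem ha_tilde_mem hbudget hvalid
  obtain ⟨cLow, hcLow, hiLow, hlow⟩ := exists_coeff_le_measureReal_of_exact (μ := μ) (α := α)
    hG_mono hG_le hN_meas hR_meas ha_meas hδ_meas ha_mem ha_tilde_mem
  obtain ⟨c, hc, hc_le, hc_eq⟩ :=
    exists_coeff_le_integral_sum_and_eq hcLow hcUp hiLow hiUp (sub_le_iff_le_add'.2 hup)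
  refine ⟨⟨c, hc, fun ω => abs_sum_mul_le_sum_abs fun t => hc t ω, sub_le_iff_le_add'.1 hc_le,
    fun hexact hbudget_eq hnull => eq_add_of_sub_eq'
      (hc_eq (le_sub_iff_add_le'.2 (hlow hexact hbudget_eq hnull))).symm⟩,
    hup.trans (add_le_add le_rfl (integral_sum_mul_le_integral_sum_abs hcUp hiUp hδ))⟩
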